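/- arXiv:2010.07893 — 3 statements merged into one kernel-verified Lean document; each statement's English description precedes it below -/
import Mathlib

section
/- For every l ∈ {1, …, L}, E[G ∇_{W^l} log π_l(H^{l-1}, H^l; W^l)] = E[G · E[∇_{W^l} log π_l(H^{l-1}, H^l; W^l) | S, A]]; that is, replacing the per-layer score by its conditional expectation given the state and the selected action leaves the expected parameter update unchanged. -/
/-!
The score `X` is a function of the whole trajectory `K = (H^0, …, H^L)`, and conditioning on a
random variable is self-adjoint for the `p`-weighted pairing, `E[G · E[X | Y]] = E[E[G | Y] · X]`.
Hence `E[G X] = E[G · E[X | K]] = E[E[G | K] · X] = E[E[G | S, A] · X] = E[G · E[X | S, A]]`,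
the middle step being the conditional independence of `G` and the hidden layers given `(S, A)`.
-/

open scoped Classical

noncomputable section

/-- Probability of an event `E` under the probability mass function `p` on a finite
sample space `Ω`. -/
def pr {Ω : Type*} [Fintype Ω] (p : Ω → ℝ) (E : Ω → Prop) : ℝ :=
  ∑ ω, if E ω then p ω else 0

/-- Conditional expectation `E[X | E]` of `X` given the event `E`, under `p`. -/
def condExp {Ω : Type*} [Fintype Ω] (p : Ω → ℝ) (X : Ω → ℝ) (E : Ω → Prop) : ℝ :=
  (∑ ω, if E ω then p ω * X ω else 0) / pr p E

/-- Conditional expectation `E[X | E]` of a vector-valued `X` given the event `E`. -/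
def condExpVec {Ω : Type*} [Fintype Ω] {V : Type*} [AddCommGroup V] [Module ℝ V]
    (p : Ω → ℝ) (X : Ω → V) (E : Ω → Prop) : V :=
  (pr p E)⁻¹ • ∑ ω, if E ω then p ω • X ω else 0

section FiniteConditioning

variable {Ω V B K : Type*} [Fintype Ω] [AddCommGroup V] [Module ℝ V] {p : Ω → ℝ}

lemma le_pr (hp : ∀ ω, 0 ≤ p ω) {E : Ω → Prop} {ω : Ω} (hω : E ω) : p ω ≤ pr p E := by
  have h := Finset.single_le_sum (f := fun ω => if E ω then p ω else 0)
    (fun x _ => by split_ifs <;> simp [hp x]) (Finset.mem_univ ω)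
  rw [pr]
  simpa [hω] using h

lemma pr_ne_zero_of_ne_zero (hp : ∀ ω, 0 ≤ p ω) {E : Ω → Prop} {ω : Ω} (hω : E ω)
    (hpω : p ω ≠ 0) : pr p E ≠ 0 :=
  ((lt_of_le_of_ne (hp ω) hpω.symm).trans_le (le_pr hp hω)).ne'

lemma condExpVec_fiber_eq_self (Y : Ω → B) {X : Ω → V}
    (hX : ∀ ω ω', Y ω' = Y ω → X ω' = X ω) (ω : Ω)
    (h : pr p (fun ω' => Y ω' = Y ω) ≠ 0) :
    condExpVec p X (fun ω' => Y ω' = Y ω) = X ω := by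
  have hsum : (∑ ω', if Y ω' = Y ω then p ω' • X ω' else 0)
      = pr p (fun ω' => Y ω' = Y ω) • X ω := by
    rw [pr, Finset.sum_smul]
    refine Finset.sum_congr rfl fun ω' _ => ?_
    split_ifs with hω'
    · rw [hX ω ω' hω']
    · rw [zero_smul]
  rw [condExpVec, hsum, inv_smul_smul₀ h]

lemma sum_smul_condExpVec_eq_sum_condExp_smul (G : Ω → ℝ) (X : Ω → V) (Y : Ω → B) :
    ∑ ω, (p ω * G ω) • condExpVec p X (fun ω' => Y ω' = Y ω)
      = ∑ ω, (p ω * condExp p G (fun ω' => Y ω' = Y ω)) • X ω := by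
  have hpr_fiber : ∀ ω ω', Y ω' = Y ω →
      pr p (fun x => Y x = Y ω') = pr p (fun x => Y x = Y ω) := fun ω ω' h => by rw [h]
  have lhs : ∀ ω, (p ω * G ω) • condExpVec p X (fun ω' => Y ω' = Y ω)
      = ∑ ω', if Y ω' = Y ω then
          ((pr p (fun x => Y x = Y ω))⁻¹ * p ω * G ω * p ω') • X ω' else 0 := by
    intro ω
    rw [condExpVec, smul_smul, Finset.smul_sum]
    refine Finset.sum_congr rfl fun ω' _ => ?_
    split_ifs
    · rw [smul_smul]; congr 1; ring
    · rw [smul_zero]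
  have rhs : ∀ ω, (p ω * condExp p G (fun ω' => Y ω' = Y ω)) • X ω
      = ∑ ω', if Y ω' = Y ω then
          ((pr p (fun x => Y x = Y ω))⁻¹ * p ω * p ω' * G ω') • X ω else 0 := by
    intro ω
    rw [condExp, div_eq_inv_mul, Finset.mul_sum, Finset.mul_sum, Finset.sum_smul]
    refine Finset.sum_congr rfl fun ω' _ => ?_
    split_ifs
    · congr 1; ring
    · simp
  simp only [lhs, rhs]
  rw [Finset.sum_comm]
  refine Finset.sum_congr rfl fun ω _ => Finset.sum_congr rfl fun ω' _ => ?_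
  by_cases h : Y ω' = Y ω
  · rw [if_pos h, if_pos h.symm, hpr_fiber ω ω' h]
    congr 1; ring
  · rw [if_neg h, if_neg (Ne.symm h)]

theorem sum_smul_eq_sum_smul_condExpVec_of_condExp_eq (hp : ∀ ω, 0 ≤ p ω) (G : Ω → ℝ)
    (key : Ω → K) (Y : Ω → B) {X : Ω → V} (hX : ∀ ω ω', key ω' = key ω → X ω' = X ω)
    (hG : ∀ ω, pr p (fun ω' => key ω' = key ω) ≠ 0 →
      condExp p G (fun ω' => key ω' = key ω) = condExp p G (fun ω' => Y ω' = Y ω)) :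
    ∑ ω, (p ω * G ω) • X ω
      = ∑ ω, (p ω * G ω) • condExpVec p X (fun ω' => Y ω' = Y ω) := by
  have h_key : ∀ ω, p ω ≠ 0 → pr p (fun ω' => key ω' = key ω) ≠ 0 :=
    fun ω => pr_ne_zero_of_ne_zero hp rfl
  calc ∑ ω, (p ω * G ω) • X ω
      = ∑ ω, (p ω * G ω) • condExpVec p X (fun ω' => key ω' = key ω) := by
        refine Finset.sum_congr rfl fun ω _ => ?_
        by_cases hpω : p ω = 0
        · simp [hpω]
        · rw [condExpVec_fiber_eq_self key hX ω (h_key ω hpω)]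
    _ = ∑ ω, (p ω * condExp p G (fun ω' => key ω' = key ω)) • X ω :=
        sum_smul_condExpVec_eq_sum_condExp_smul G X key
    _ = ∑ ω, (p ω * condExp p G (fun ω' => Y ω' = Y ω)) • X ω := by
        refine Finset.sum_congr rfl fun ω _ => ?_
        by_cases hpω : p ω = 0
        · simp [hpω]
        · rw [hG ω (h_key ω hpω)]
    _ = ∑ ω, (p ω * G ω) • condExpVec p X (fun ω' => Y ω' = Y ω) :=
        (sum_smul_condExpVec_eq_sum_condExp_smul G X Y).symm

end FiniteConditioning

theorem stmt1_general (Ω : Type*) [Fintype Ω] (p : Ω → ℝ)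
    (hp0 : ∀ ω, 0 ≤ p ω)
    (L : ℕ) (T : ℕ → Type*)
    (d : ℕ → ℕ)
    (π : (l : ℕ) → T (l - 1) → T l → EuclideanSpace ℝ (Fin (d l)) → ℝ)
    (W : (l : ℕ) → EuclideanSpace ℝ (Fin (d l)))
    (H : (l : ℕ) → Ω → T l) (G : Ω → ℝ)
    (hG : ∀ τ : ((l : Fin (L + 1)) → T l.1),
      pr p (fun ω => ∀ l : Fin (L + 1), H l.1 ω = τ l) ≠ 0 →
        condExp p G (fun ω => ∀ l : Fin (L + 1), H l.1 ω = τ l)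
          = condExp p G (fun ω => H 0 ω = τ ⟨0, Nat.succ_pos L⟩ ∧ H L ω = τ (Fin.last L)))
    (l : ℕ) (hl : l ∈ Finset.Icc 1 L) :
    ∑ ω, (p ω * G ω) •
        gradient (fun w => Real.log (π l (H (l - 1) ω) (H l ω) w)) (W l)
      = ∑ ω, (p ω * G ω) •
          condExpVec p
            (fun ω' => gradient (fun w => Real.log (π l (H (l - 1) ω') (H l ω') w)) (W l))
            (fun ω' => H 0 ω' = H 0 ω ∧ H L ω' = H L ω) := by
  obtain ⟨-, hlL⟩ := Finset.mem_Icc.mp hl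
  let trajectory : Ω → (j : Fin (L + 1)) → T j.1 := fun ω j => H j.1 ω
  have h_layer : ∀ ω ω', trajectory ω' = trajectory ω → ∀ j ≤ L, H j ω' = H j ω :=
    fun ω ω' h j hj => congrFun h ⟨j, Nat.lt_succ_of_le hj⟩
  have h_event : ∀ ω, (fun ω' => H 0 ω' = H 0 ω ∧ H L ω' = H L ω)
      = fun ω' => (H 0 ω', H L ω') = (H 0 ω, H L ω) := fun ω => by simp only [Prod.mk.injEq]
  simp only [h_event]
  refine sum_smul_eq_sum_smul_condExpVec_of_condExp_eq hp0 G trajectory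
    (fun ω => (H 0 ω, H L ω)) (fun ω ω' h => ?_) (fun ω h => ?_)
  · rw [h_layer ω ω' h l hlL, h_layer ω ω' h (l - 1) (by omega)]
  · simp only [funext_iff, Prod.mk.injEq] at h ⊢
    exact hG (trajectory ω) h

/-- For a multi-layer network of stochastic units (`H^0 = S`, `H^L = A`,
layer conditionals `π_l` strictly positive, normalized and differentiable in `W^l`, layers
forming a Markov chain) and a return `G` that is conditionally independent of the hidden
layers given `(S, A)`: for every `l ∈ {1, …, L}`,
`E[G ∇_{W^l} log π_l(H^{l-1}, H^l; W^l)]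
   = E[G · E[∇_{W^l} log π_l(H^{l-1}, H^l; W^l) | S, A]]`. -/
theorem stmt1 (Ω : Type*) [Fintype Ω] (p : Ω → ℝ)
    (hp0 : ∀ ω, 0 ≤ p ω) (hp1 : ∑ ω, p ω = 1)
    (L : ℕ) (hL : 1 ≤ L) (T : ℕ → Type*) [∀ l, Fintype (T l)] [∀ l, Nonempty (T l)]
    (d : ℕ → ℕ)
    (π : (l : ℕ) → T (l - 1) → T l → EuclideanSpace ℝ (Fin (d l)) → ℝ)
    (W : (l : ℕ) → EuclideanSpace ℝ (Fin (d l)))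
    (H : (l : ℕ) → Ω → T l) (G : Ω → ℝ)
    (hpos : ∀ l ∈ Finset.Icc 1 L, ∀ x y w, 0 < π l x y w)
    (hdiff : ∀ l ∈ Finset.Icc 1 L, ∀ x y, Differentiable ℝ (π l x y))
    (hnorm : ∀ l ∈ Finset.Icc 1 L, ∀ x w, ∑ y, π l x y w = 1)
    (hMarkov : ∀ τ : ((l : Fin (L + 1)) → T l.1),
      pr p (fun ω => ∀ l : Fin (L + 1), H l.1 ω = τ l)
        = pr p (fun ω => H 0 ω = τ ⟨0, Nat.succ_pos L⟩) *
            ∏ l : Fin L, π (l.1 + 1) (τ l.castSucc) (τ l.succ) (W (l.1 + 1)))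
    (hG : ∀ τ : ((l : Fin (L + 1)) → T l.1),
      pr p (fun ω => ∀ l : Fin (L + 1), H l.1 ω = τ l) ≠ 0 →
        condExp p G (fun ω => ∀ l : Fin (L + 1), H l.1 ω = τ l)
          = condExp p G (fun ω => H 0 ω = τ ⟨0, Nat.succ_pos L⟩ ∧ H L ω = τ (Fin.last L)))
    (l : ℕ) (hl : l ∈ Finset.Icc 1 L) :
    ∑ ω, (p ω * G ω) •
        gradient (fun w => Real.log (π l (H (l - 1) ω) (H l ω) w)) (W l)
      = ∑ ω, (p ω * G ω) •
          condExpVec p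
            (fun ω' => gradient (fun w => Real.log (π l (H (l - 1) ω') (H l ω') w)) (W l))
            (fun ω' => H 0 ω' = H 0 ω ∧ H L ω' = H L ω) :=
  stmt1_general Ω p hp0 L T d π W H G hG l hl

end
end

section
/- Suppose ∇_h E(ĥ; s, a) = 0 at ĥ = (ĥ^1, …, ĥ^{L-1}), and let ẑ = (ẑ^1, …, ẑ^{L-1}) be the unique noise vector with ĥ = h(ẑ; W, s), i.e. ẑ^l = (ĥ^l − g^l(ĥ^{l-1}; W^l))/σ_l for l = 1, …, L−1 (with ĥ^0 = s). Then for every l ∈ {1, …, L}, writing ĥ^L = a, the REINFORCE parameter gradient equals the reparametrized backpropagation parameter gradient: ∇_{W^l} log π_l(ĥ^{l-1}, ĥ^l; W^l) = ∇_{W^l} log π_L(h^{L-1}(ẑ; W, s), a; W^L). -/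
/-!
Write `δ_k = (ĥ^k - g^k(ĥ^{k-1}; W^k)) / σ_k²` for the score of the Gaussian layer `k` with
respect to its mean. Stationarity of the energy in `ĥ^k` says `δ_k = (∂g^{k+1}/∂h)^* δ_{k+1}`
for `k < L - 1` and `δ_{L-1} = ∇ log π_L(ĥ^{L-1}, a; W^L)`: these are exactly the backpropagation
equations of the reparametrized network, whose forward pass at `ẑ` reproduces `ĥ`. Hence
backpropagating `∇ log π_L` down to `W^l` gives `(∂g^l/∂W)^* δ_l`, which is also the REINFORCE
gradient `∇_{W^l} log π_l(ĥ^{l-1}, ĥ^l; W^l)`. For `l = L` both sides agree because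
`h^{L-1}(ẑ; W, s) = ĥ^{L-1}`.
-/

open InnerProductSpace Finset

theorem HasGradientAt.comp_hasFDerivAt {E F : Type*} [NormedAddCommGroup E] [InnerProductSpace ℝ E]
    [CompleteSpace E] [NormedAddCommGroup F] [InnerProductSpace ℝ F] [CompleteSpace F]
    {f : F → ℝ} {φ : E → F} {Φ : E →L[ℝ] F} {v : F} {x : E}
    (hf : HasGradientAt f v (φ x)) (hφ : HasFDerivAt φ Φ x) :
    HasGradientAt (fun e => f (φ e)) (Φ.adjoint v) x := by
  have hadj : (toDual ℝ F v).comp Φ = toDual ℝ E (Φ.adjoint v) := by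
    ext u
    simp [toDual_apply_apply, ContinuousLinearMap.adjoint_inner_left]
  rw [hasGradientAt_iff_hasFDerivAt] at hf ⊢
  rw [← hadj]
  exact hf.comp x hφ

theorem add_eq_zero_of_gradient_eq_zero {F : Type*} [NormedAddCommGroup F] [InnerProductSpace ℝ F]
    [CompleteSpace F] {f A B : F → ℝ} {a b x₀ : F} {c : ℝ}
    (hf : ∀ x, f x = -(A x + B x) + c) (hA : HasGradientAt A a x₀) (hB : HasGradientAt B b x₀)
    (h0 : gradient f x₀ = 0) : a + b = 0 := by
  have hgrad : HasGradientAt f (-(a + b)) x₀ := by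
    rw [hasGradientAt_iff_hasFDerivAt] at hA hB ⊢
    rw [funext hf, map_neg, map_add]
    exact (hA.add hB).neg.add_const c
  rwa [hgrad.gradient, neg_eq_zero] at h0

/-- The multivariate Gaussian density on `ℝⁿ` with mean `μ` and covariance `σ² I`. -/
noncomputable def gaussDensity {n : ℕ} (σ : ℝ) (μ y : EuclideanSpace ℝ (Fin n)) : ℝ :=
  (Real.sqrt (2 * Real.pi * σ ^ 2))⁻¹ ^ n * Real.exp (-‖y - μ‖ ^ 2 / (2 * σ ^ 2))

section Gaussian

variable {m : ℕ}

noncomputable def gaussScore (σ : ℝ) (μ y : EuclideanSpace ℝ (Fin m)) :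
    EuclideanSpace ℝ (Fin m) :=
  (σ ^ 2)⁻¹ • (y - μ)

theorem gaussDensity_comm (σ : ℝ) (μ y : EuclideanSpace ℝ (Fin m)) :
    gaussDensity σ μ y = gaussDensity σ y μ := by
  rw [gaussDensity, gaussDensity, norm_sub_rev]

theorem log_gaussDensity (σ : ℝ) (μ y : EuclideanSpace ℝ (Fin m)) :
    Real.log (gaussDensity σ μ y)
      = m * Real.log (Real.sqrt (2 * Real.pi * σ ^ 2))⁻¹ - ‖y - μ‖ ^ 2 / (2 * σ ^ 2) := by
  rcases eq_or_ne σ 0 with rfl | hσ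
  · simp [gaussDensity]
  have hpos : 0 < Real.sqrt (2 * Real.pi * σ ^ 2) := Real.sqrt_pos.2 (by positivity)
  rw [gaussDensity, Real.log_mul (by positivity) (Real.exp_ne_zero _), Real.log_pow,
    Real.log_exp]
  ring

theorem hasGradientAt_log_gaussDensity_right (σ : ℝ) (μ y : EuclideanSpace ℝ (Fin m)) :
    HasGradientAt (fun y => Real.log (gaussDensity σ μ y)) (-gaussScore σ μ y) y := by
  have hsq := (((hasFDerivAt_id y).sub_const μ).norm_sq.const_mul (2 * σ ^ 2)⁻¹).const_sub
    (m * Real.log (Real.sqrt (2 * Real.pi * σ ^ 2))⁻¹)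
  have hder : toDual ℝ _ (-gaussScore σ μ y)
      = -((2 * σ ^ 2)⁻¹ • 2 • (innerSL ℝ (y - μ)).comp (ContinuousLinearMap.id ℝ _)) := by
    ext u
    simp only [gaussScore, map_neg, map_smul, map_sub, neg_apply, smul_apply, sub_apply,
      toDual_apply_apply, smul_eq_mul, mul_inv_rev, ContinuousLinearMap.comp_id, coe_innerSL_apply,
      nsmul_eq_mul, Nat.cast_ofNat, neg_inj]
    ring
  rw [hasGradientAt_iff_hasFDerivAt, hder]
  refine hsq.congr_of_eventuallyEq (Filter.Eventually.of_forall fun x => ?_)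
  simp only [log_gaussDensity, id, div_eq_inv_mul]

theorem hasGradientAt_log_gaussDensity_left (σ : ℝ) (μ y : EuclideanSpace ℝ (Fin m)) :
    HasGradientAt (fun μ => Real.log (gaussDensity σ μ y)) (gaussScore σ μ y) μ := by
  have h := hasGradientAt_log_gaussDensity_right σ y μ
  simp only [gaussDensity_comm σ y] at h
  convert h using 1
  rw [gaussScore, gaussScore, ← smul_neg, neg_sub]

end Gaussian

/-- The reparametrization `h^k(z; V, s)`: `h^0(z; V, s) = s` and
`h^{k+1}(z; V, s) = g^{k+1}(h^k(z; V, s); V^{k+1}) + σ_{k+1} z^{k+1}`. -/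
noncomputable def reparam (n dpar : ℕ → ℕ)
    (g : (l : ℕ) → EuclideanSpace ℝ (Fin (dpar l)) →
      EuclideanSpace ℝ (Fin (n (l - 1))) → EuclideanSpace ℝ (Fin (n l)))
    (σ : ℕ → ℝ) (V : (l : ℕ) → EuclideanSpace ℝ (Fin (dpar l)))
    (s : EuclideanSpace ℝ (Fin (n 0))) (z : (l : ℕ) → EuclideanSpace ℝ (Fin (n l))) :
    (k : ℕ) → EuclideanSpace ℝ (Fin (n k))
  | 0 => s
  | (k + 1) => g (k + 1) (V (k + 1)) (reparam n dpar g σ V s z k) + σ (k + 1) • z (k + 1)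

section Network

variable {n dpar : ℕ → ℕ}
  {g : (l : ℕ) → EuclideanSpace ℝ (Fin (dpar l)) →
    EuclideanSpace ℝ (Fin (n (l - 1))) → EuclideanSpace ℝ (Fin (n l))}
  {σ : ℕ → ℝ} {W : (l : ℕ) → EuclideanSpace ℝ (Fin (dpar l))}
  {s : EuclideanSpace ℝ (Fin (n 0))} {z : (l : ℕ) → EuclideanSpace ℝ (Fin (n l))}

theorem reparam_eq_of_forall_le {h : (l : ℕ) → EuclideanSpace ℝ (Fin (n l))} {K : ℕ}
    (hs : h 0 = s) (hh : ∀ k, 1 ≤ k → k ≤ K → h k = g k (W k) (h (k - 1)) + σ k • z k) :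
    ∀ k ≤ K, reparam n dpar g σ W s z k = h k
  | 0, _ => hs.symm
  | k + 1, hk => by
    rw [reparam, reparam_eq_of_forall_le hs hh k (by omega), hh (k + 1) (by omega) hk]
    rfl

theorem reparam_update_of_lt {l k : ℕ} (w : EuclideanSpace ℝ (Fin (dpar l))) (hk : k < l) :
    reparam n dpar g σ (Function.update W l w) s z k = reparam n dpar g σ W s z k := by
  induction k with
  | zero => rfl
  | succ k ih =>
    rw [reparam, reparam, ih (by omega), Function.update_of_ne (by omega)]

/-- Backpropagation: `δ` is the gradient of `f` pulled back to layer `k` of the forward pass. -/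
theorem hasGradientAt_comp_reparam_update {l K : ℕ} (hl : 1 ≤ l) (hlK : l ≤ K)
    (δ : (k : ℕ) → EuclideanSpace ℝ (Fin (n k)))
    (hgw : DifferentiableAt ℝ (fun w => g l w (reparam n dpar g σ W s z (l - 1))) (W l))
    (hgx : ∀ k, l ≤ k → k < K →
      DifferentiableAt ℝ (g (k + 1) (W (k + 1))) (reparam n dpar g σ W s z k))
    (hδ : ∀ k, l ≤ k → k < K →
      (fderiv ℝ (g (k + 1) (W (k + 1))) (reparam n dpar g σ W s z k)).adjoint (δ (k + 1)) = δ k)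
    {f : EuclideanSpace ℝ (Fin (n K)) → ℝ}
    (hf : HasGradientAt f (δ K) (reparam n dpar g σ W s z K)) :
    HasGradientAt (fun w => f (reparam n dpar g σ (Function.update W l w) s z K))
      ((fderiv ℝ (fun w => g l w (reparam n dpar g σ W s z (l - 1))) (W l)).adjoint (δ l))
      (W l) := by
  obtain ⟨m, rfl⟩ : ∃ m, l = m + 1 := ⟨l - 1, by omega⟩
  induction K, hlK using Nat.le_induction with
  | base =>
    have hfun : ∀ w, reparam n dpar g σ (Function.update W (m + 1) w) s z (m + 1)
        = g (m + 1) w (reparam n dpar g σ W s z m) + σ (m + 1) • z (m + 1) := by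
      intro w
      rw [reparam, Function.update_self, reparam_update_of_lt w (Nat.lt_succ_self m)]
    simp only [hfun]
    exact HasGradientAt.comp_hasFDerivAt hf (hgw.hasFDerivAt.add_const _)
  | succ K hK ih =>
    have hfun : ∀ w, reparam n dpar g σ (Function.update W (m + 1) w) s z (K + 1)
        = g (K + 1) (W (K + 1)) (reparam n dpar g σ (Function.update W (m + 1) w) s z K)
          + σ (K + 1) • z (K + 1) := by
      intro w
      rw [reparam, Function.update_of_ne (by omega)]
    simp only [hfun]
    refine ih (f := fun x => f (g (K + 1) (W (K + 1)) x + σ (K + 1) • z (K + 1))) ?_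
      (fun k hk hkK => hgx k hk (by omega)) (fun k hk hkK => hδ k hk (by omega))
    rw [← hδ K hK (Nat.lt_succ_self K)]
    exact HasGradientAt.comp_hasFDerivAt hf
      ((hgx K hK (Nat.lt_succ_self K)).hasFDerivAt.add_const _)

variable {M : ℕ} {R : EuclideanSpace ℝ (Fin (n M)) → ℝ} {C : ℝ}

variable (n dpar g σ W M R C) in
/-- The energy `E(h; s, a)` of hidden layers `1, …, M`, with `R` the output log-density
`log π_L(·, a; W^L)` and `h 0 = s`. -/
noncomputable def energy (h : (l : ℕ) → EuclideanSpace ℝ (Fin (n l))) : ℝ :=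
  -((∑ j ∈ Icc 1 M, Real.log (gaussDensity (σ j) (g j (W j) (h (j - 1))) (h j))) + R (h M)) + C

theorem exists_energy_update_eq_of_lt {h : (l : ℕ) → EuclideanSpace ℝ (Fin (n l))} {k : ℕ}
    (hk : 1 ≤ k) (hkM : k < M) :
    ∃ c, ∀ x, energy n dpar g σ W M R C (Function.update h k x)
      = -(Real.log (gaussDensity (σ k) (g k (W k) (h (k - 1))) x)
          + Real.log (gaussDensity (σ (k + 1)) (g (k + 1) (W (k + 1)) x) (h (k + 1)))) + c := by
  have hk_mem : k ∈ Icc 1 M := mem_Icc.2 ⟨hk, hkM.le⟩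
  have hk1_mem : k + 1 ∈ (Icc 1 M).erase k := mem_erase.2 ⟨by omega, mem_Icc.2 ⟨by omega, hkM⟩⟩
  refine ⟨-((∑ j ∈ ((Icc 1 M).erase k).erase (k + 1),
      Real.log (gaussDensity (σ j) (g j (W j) (h (j - 1))) (h j))) + R (h M)) + C, fun x => ?_⟩
  have hrest : ∀ j ∈ ((Icc 1 M).erase k).erase (k + 1),
      Real.log (gaussDensity (σ j) (g j (W j) (Function.update h k x (j - 1)))
        (Function.update h k x j))
      = Real.log (gaussDensity (σ j) (g j (W j) (h (j - 1))) (h j)) := by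
    intro j hj
    obtain ⟨hjk1, hjk, hj⟩ := by simpa only [mem_erase, mem_Icc] using hj
    rw [Function.update_of_ne hjk, Function.update_of_ne (by omega)]
  have hprev : Function.update h k x (k + 1 - 1) = x := Function.update_self k x h
  rw [energy, ← add_sum_erase _ _ hk_mem, ← add_sum_erase _ _ hk1_mem, sum_congr rfl hrest,
    hprev, Function.update_self, Function.update_of_ne (by omega : k - 1 ≠ k),
    Function.update_of_ne (by omega : k + 1 ≠ k), Function.update_of_ne hkM.ne']
  ring

theorem exists_energy_update_self_eq {h : (l : ℕ) → EuclideanSpace ℝ (Fin (n l))} (hM : 1 ≤ M) :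
    ∃ c, ∀ x, energy n dpar g σ W M R C (Function.update h M x)
      = -(Real.log (gaussDensity (σ M) (g M (W M) (h (M - 1))) x) + R x) + c := by
  have hM_mem : M ∈ Icc 1 M := mem_Icc.2 ⟨hM, le_rfl⟩
  refine ⟨-(∑ j ∈ (Icc 1 M).erase M,
      Real.log (gaussDensity (σ j) (g j (W j) (h (j - 1))) (h j))) + C, fun x => ?_⟩
  have hrest : ∀ j ∈ (Icc 1 M).erase M,
      Real.log (gaussDensity (σ j) (g j (W j) (Function.update h M x (j - 1)))
        (Function.update h M x j))
      = Real.log (gaussDensity (σ j) (g j (W j) (h (j - 1))) (h j)) := by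
    intro j hj
    obtain ⟨hjM, hj⟩ := by simpa only [mem_erase, mem_Icc] using hj
    rw [Function.update_of_ne hjM, Function.update_of_ne (by omega)]
  rw [energy, ← add_sum_erase _ _ hM_mem, sum_congr rfl hrest, Function.update_self,
    Function.update_of_ne (by omega : M - 1 ≠ M)]
  ring

theorem gaussScore_eq_adjoint_of_stationary {h : (l : ℕ) → EuclideanSpace ℝ (Fin (n l))} {k : ℕ}
    (hk : 1 ≤ k) (hkM : k < M) (hg : DifferentiableAt ℝ (g (k + 1) (W (k + 1))) (h k))
    (hstat : gradient (fun x => energy n dpar g σ W M R C (Function.update h k x)) (h k) = 0) :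
    gaussScore (σ k) (g k (W k) (h (k - 1))) (h k)
      = (fderiv ℝ (g (k + 1) (W (k + 1))) (h k)).adjoint
          (gaussScore (σ (k + 1)) (g (k + 1) (W (k + 1)) (h k)) (h (k + 1))) := by
  obtain ⟨c, hc⟩ := exists_energy_update_eq_of_lt (R := R) (C := C) (h := h) hk hkM
  have hnext := HasGradientAt.comp_hasFDerivAt
    (hasGradientAt_log_gaussDensity_left (σ (k + 1)) _ (h (k + 1))) hg.hasFDerivAt
  rw [← neg_add_eq_zero]
  exact add_eq_zero_of_gradient_eq_zero hc
    (hasGradientAt_log_gaussDensity_right (σ k) _ (h k)) hnext hstat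

theorem gaussScore_eq_gradient_of_stationary {h : (l : ℕ) → EuclideanSpace ℝ (Fin (n l))}
    (hM : 1 ≤ M) (hR : DifferentiableAt ℝ R (h M))
    (hstat : gradient (fun x => energy n dpar g σ W M R C (Function.update h M x)) (h M) = 0) :
    gaussScore (σ M) (g M (W M) (h (M - 1))) (h M) = gradient R (h M) := by
  obtain ⟨c, hc⟩ := exists_energy_update_self_eq (R := R) (C := C) (h := h) hM
  rw [← neg_add_eq_zero]
  exact add_eq_zero_of_gradient_eq_zero hc
    (hasGradientAt_log_gaussDensity_right (σ M) _ (h M)) hR.hasGradientAt hstat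

end Network

theorem stmt4_general (L : ℕ) (n dpar : ℕ → ℕ)
    (g : (l : ℕ) → EuclideanSpace ℝ (Fin (dpar l)) →
      EuclideanSpace ℝ (Fin (n (l - 1))) → EuclideanSpace ℝ (Fin (n l)))
    (σ : ℕ → ℝ) (hσ : ∀ l ∈ Finset.Icc 1 (L - 1), 0 < σ l)
    (hgdiff₁ : ∀ l ∈ Finset.Icc 1 (L - 1), ∀ w, Differentiable ℝ (g l w))
    (hgdiff₂ : ∀ l ∈ Finset.Icc 1 (L - 1), ∀ x, Differentiable ℝ (fun w => g l w x))
    (α : Type*)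
    (πL : EuclideanSpace ℝ (Fin (dpar L)) → EuclideanSpace ℝ (Fin (n (L - 1))) → α → ℝ)
    (hπLpos : ∀ w x b, 0 < πL w x b)
    (hπLdiff₁ : ∀ w b, Differentiable ℝ (fun x => πL w x b))
    (W : (l : ℕ) → EuclideanSpace ℝ (Fin (dpar l)))
    (s : EuclideanSpace ℝ (Fin (n 0))) (a : α) (C : ℝ)
    (hhat : (l : ℕ) → EuclideanSpace ℝ (Fin (n l))) (hs : hhat 0 = s)
    (hstat : ∀ k ∈ Finset.Icc 1 (L - 1),
      gradient (fun x : EuclideanSpace ℝ (Fin (n k)) =>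
        -((∑ j ∈ Finset.Icc 1 (L - 1),
            Real.log (gaussDensity (σ j) (g j (W j) (Function.update hhat k x (j - 1)))
              (Function.update hhat k x j)))
          + Real.log (πL (W L) (Function.update hhat k x (L - 1)) a)) + C) (hhat k) = 0)
    (zhat : (l : ℕ) → EuclideanSpace ℝ (Fin (n l)))
    (hzhat : ∀ k ∈ Finset.Icc 1 (L - 1),
      zhat k = (σ k)⁻¹ • (hhat k - g k (W k) (hhat (k - 1)))) :
    (∀ l ∈ Finset.Icc 1 (L - 1),
      gradient (fun w => Real.log (gaussDensity (σ l) (g l w (hhat (l - 1))) (hhat l))) (W l)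
        = gradient (fun w : EuclideanSpace ℝ (Fin (dpar l)) =>
            Real.log (πL (W L)
              (reparam n dpar g σ (Function.update W l w) s zhat (L - 1)) a)) (W l))
    ∧ gradient (fun w => Real.log (πL w (hhat (L - 1)) a)) (W L)
        = gradient (fun w =>
            Real.log (πL w (reparam n dpar g σ W s zhat (L - 1)) a)) (W L) := by
  have hrep : ∀ k ≤ L - 1, reparam n dpar g σ W s zhat k = hhat k := by
    refine reparam_eq_of_forall_le hs fun k hk hkL => ?_
    have hk_mem := mem_Icc.2 ⟨hk, hkL⟩
    rw [hzhat k hk_mem, smul_inv_smul₀ (hσ k hk_mem).ne', add_sub_cancel]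
  refine ⟨fun l hl => ?_, by rw [hrep _ le_rfl]⟩
  obtain ⟨hl1, hlL⟩ := mem_Icc.1 hl
  have hgx : ∀ k, 1 ≤ k → k < L - 1 → Differentiable ℝ (g (k + 1) (W (k + 1))) :=
    fun k hk hkL => hgdiff₁ (k + 1) (mem_Icc.2 ⟨by omega, hkL⟩) _
  let R := fun x => Real.log (πL (W L) x a)
  have hR : Differentiable ℝ R := fun x => (hπLdiff₁ (W L) a x).log (hπLpos (W L) x a).ne'
  let δ := fun k => gaussScore (σ k) (g k (W k) (hhat (k - 1))) (hhat k)
  have hδ : ∀ k, 1 ≤ k → k < L - 1 →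
      (fderiv ℝ (g (k + 1) (W (k + 1))) (hhat k)).adjoint (δ (k + 1)) = δ k :=
    fun k hk hkL => (gaussScore_eq_adjoint_of_stationary (M := L - 1) (R := R) (C := C) hk hkL
      (hgx k hk hkL _) (hstat k (mem_Icc.2 ⟨hk, hkL.le⟩))).symm
  have hδL : δ (L - 1) = gradient R (hhat (L - 1)) :=
    gaussScore_eq_gradient_of_stationary (C := C) (hl1.trans hlL) (hR _)
      (hstat _ (mem_Icc.2 ⟨hl1.trans hlL, le_rfl⟩))
  have hback := hasGradientAt_comp_reparam_update (s := s) (z := zhat) (f := R) hl1 hlL δ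
    (hgdiff₂ l hl _ _) (fun k hk hkL => hgx k (by omega) hkL _)
    (fun k hk hkL => by rw [hrep k (by omega)]; exact hδ k (by omega) hkL)
    (by rw [hrep _ le_rfl, hδL]; exact (hR _).hasGradientAt)
  have hreinforce := HasGradientAt.comp_hasFDerivAt
    (hasGradientAt_log_gaussDensity_left (σ l) _ (hhat l))
    (hgdiff₂ l hl (hhat (l - 1)) (W l)).hasFDerivAt
  rw [hreinforce.gradient, hback.gradient, hrep (l - 1) (by omega)]

/-- **Theorem 2 of the paper.** In a multi-layer network of stochastic units
whose hidden layers are normally distributed,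
`π_l(h^{l-1}, h^l; W^l) = N(h^l; g^l(h^{l-1}; W^l), σ_l² I)` for `l ∈ {1, …, L−1}`, with a
strictly positive output density `π_L(h^{L-1}, a; W^L)` differentiable in `h^{L-1}` and `W^L`,
and energy `E(h; s, a) = −∑_{l=1}^{L} log π_l(h^{l-1}, h^l; W^l) + C(s, a)`: suppose
`∇_h E(ĥ; s, a) = 0` (with `ĥ^0 = s`), and let `ẑ` be the unique noise vector with
`ĥ = h(ẑ; W, s)`, i.e. `ẑ^l = (ĥ^l − g^l(ĥ^{l-1}; W^l))/σ_l` for `l = 1, …, L−1`.  Then for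
every `l ∈ {1, …, L}` (the cases `l ≤ L−1` and `l = L` are the two conjuncts), the REINFORCE
parameter gradient equals the reparametrized backpropagation parameter gradient:
`∇_{W^l} log π_l(ĥ^{l-1}, ĥ^l; W^l) = ∇_{W^l} log π_L(h^{L-1}(ẑ; W, s), a; W^L)`. -/
theorem stmt4 (L : ℕ) (hL : 1 ≤ L) (n dpar : ℕ → ℕ)
    (g : (l : ℕ) → EuclideanSpace ℝ (Fin (dpar l)) →
      EuclideanSpace ℝ (Fin (n (l - 1))) → EuclideanSpace ℝ (Fin (n l)))
    (σ : ℕ → ℝ) (hσ : ∀ l ∈ Finset.Icc 1 (L - 1), 0 < σ l)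
    (hgdiff₁ : ∀ l ∈ Finset.Icc 1 (L - 1), ∀ w, Differentiable ℝ (g l w))
    (hgdiff₂ : ∀ l ∈ Finset.Icc 1 (L - 1), ∀ x, Differentiable ℝ (fun w => g l w x))
    (α : Type*)
    (πL : EuclideanSpace ℝ (Fin (dpar L)) → EuclideanSpace ℝ (Fin (n (L - 1))) → α → ℝ)
    (hπLpos : ∀ w x b, 0 < πL w x b)
    (hπLdiff₁ : ∀ w b, Differentiable ℝ (fun x => πL w x b))
    (hπLdiff₂ : ∀ x b, Differentiable ℝ (fun w => πL w x b))
    (W : (l : ℕ) → EuclideanSpace ℝ (Fin (dpar l)))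
    (s : EuclideanSpace ℝ (Fin (n 0))) (a : α) (C : ℝ)
    (hhat : (l : ℕ) → EuclideanSpace ℝ (Fin (n l))) (hs : hhat 0 = s)
    (hstat : ∀ k ∈ Finset.Icc 1 (L - 1),
      gradient (fun x : EuclideanSpace ℝ (Fin (n k)) =>
        -((∑ j ∈ Finset.Icc 1 (L - 1),
            Real.log (gaussDensity (σ j) (g j (W j) (Function.update hhat k x (j - 1)))
              (Function.update hhat k x j)))
          + Real.log (πL (W L) (Function.update hhat k x (L - 1)) a)) + C) (hhat k) = 0)
    (zhat : (l : ℕ) → EuclideanSpace ℝ (Fin (n l)))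
    (hzhat : ∀ k ∈ Finset.Icc 1 (L - 1),
      zhat k = (σ k)⁻¹ • (hhat k - g k (W k) (hhat (k - 1)))) :
    (∀ l ∈ Finset.Icc 1 (L - 1),
      gradient (fun w => Real.log (gaussDensity (σ l) (g l w (hhat (l - 1))) (hhat l))) (W l)
        = gradient (fun w : EuclideanSpace ℝ (Fin (dpar l)) =>
            Real.log (πL (W L)
              (reparam n dpar g σ (Function.update W l w) s zhat (L - 1)) a)) (W l))
    ∧ gradient (fun w => Real.log (πL w (hhat (L - 1)) a)) (W L)
        = gradient (fun w =>
            Real.log (πL w (reparam n dpar g σ W s zhat (L - 1)) a)) (W L) :=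
  stmt4_general L n dpar g σ hσ hgdiff₁ hgdiff₂ α πL hπLpos hπLdiff₁ W s a C hhat hs hstat zhat
    hzhat
end

section
/- In the single-time-step setting, for every l ∈ {1, …, L}, ∇_{W^l} E[G] = E[G · E[∇_{W^l} log π_l(H^{l-1}, H^l; W^l) | S, A]]; that is, the learning rule that updates layer l by the return times the conditional expectation of the layer's score given the state and the selected action follows the gradient of the expected return. -/
/-!
Writing `E[G]` as a sum over trajectories, only the factor `π_l` of each trajectory's
probability depends on `W^l`, and `∇π_l = π_l ∇log π_l`; hence `∇_{W^l} E[G]` is the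
expectation of `R(S, A)` times the layer-`l` score along the trajectory. On a finite sample
space both remaining steps, replacing the score by its conditional expectation given
`(S, A)` and `R(S, A)` by `G`, are the tower property `E[Y(f) · Z] = E[Y(f) · E[Z | f]]`
read fibre by fibre of `f = (S, A)`.
-/

open scoped Classical

noncomputable section

open Finset

section Gradient

variable {F : Type*} [NormedAddCommGroup F] [InnerProductSpace ℝ F] [CompleteSpace F]
  {f : F → ℝ} {g x : F}

theorem HasGradientAt.fun_sum {ι : Type*} {s : Finset ι} {f : ι → F → ℝ} {g : ι → F}
    (h : ∀ i ∈ s, HasGradientAt (f i) (g i) x) :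
    HasGradientAt (fun y => ∑ i ∈ s, f i y) (∑ i ∈ s, g i) x := by
  simp only [hasGradientAt_iff_hasFDerivAt] at h ⊢
  simpa [map_sum] using HasFDerivAt.fun_sum h

theorem HasGradientAt.const_mul (c : ℝ) (h : HasGradientAt f g x) :
    HasGradientAt (fun y => c * f y) (c • g) x := by
  simp only [hasGradientAt_iff_hasFDerivAt] at h ⊢
  simpa [map_smul] using h.const_mul c

theorem HasGradientAt.mul_const (c : ℝ) (h : HasGradientAt f g x) :
    HasGradientAt (fun y => f y * c) (c • g) x := by
  simpa only [mul_comm _ c] using h.const_mul c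

theorem HasGradientAt.log (h : HasGradientAt f g x) (hx : f x ≠ 0) :
    HasGradientAt (fun y => Real.log (f y)) ((f x)⁻¹ • g) x := by
  simp only [hasGradientAt_iff_hasFDerivAt] at h ⊢
  simpa [map_smul] using h.log hx

theorem hasGradientAt_self_smul_gradient_log (hf : DifferentiableAt ℝ f x) (hx : f x ≠ 0) :
    HasGradientAt f (f x • gradient (fun y => Real.log (f y)) x) x := by
  rw [(hf.hasGradientAt.log hx).gradient, smul_inv_smul₀ hx]
  exact hf.hasGradientAt

end Gradient

section FiniteExpectation

variable {Ω : Type*} [Fintype Ω] {β : Type*} {V : Type*} [AddCommGroup V]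
  [Module ℝ V] {p : Ω → ℝ}

theorem sum_smul_comp_eq_sum_pr_smul [Fintype β] (q : Ω → ℝ) (g : Ω → β) (Φ : β → V) :
    ∑ ω, q ω • Φ (g ω) = ∑ b, pr q (fun ω => g ω = b) • Φ b := by
  rw [← Finset.sum_fiberwise univ g]
  refine sum_congr rfl fun b _ => ?_
  rw [pr, ← sum_filter, sum_smul]
  exact sum_congr rfl fun ω hω => by rw [(mem_filter.1 hω).2]

theorem sum_ite_smul_eq_pr_smul_condExpVec (hp0 : ∀ ω, 0 ≤ p ω) (X : Ω → V) (E : Ω → Prop) :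
    (∑ ω, if E ω then p ω • X ω else 0) = pr p E • condExpVec p X E := by
  rcases eq_or_ne (pr p E) 0 with hE | hE
  · rw [pr, ← sum_filter, sum_eq_zero_iff_of_nonneg fun ω _ => hp0 ω] at hE
    rw [← sum_filter, pr, ← sum_filter, sum_eq_zero fun ω hω => by rw [hE ω hω, zero_smul],
      sum_eq_zero hE, zero_smul]
  · rw [condExpVec, smul_inv_smul₀ hE]

theorem pr_mul_condExp (hp0 : ∀ ω, 0 ≤ p ω) (G : Ω → ℝ) (E : Ω → Prop) :
    pr p E * condExp p G E = pr (fun ω => p ω * G ω) E := by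
  show _ = ∑ ω, if E ω then p ω * G ω else 0
  simpa [condExp, condExpVec, div_eq_inv_mul] using
    (sum_ite_smul_eq_pr_smul_condExpVec hp0 G E).symm

theorem pr_mul_comp_eq (f : Ω → β) (c : β → ℝ) (b : β) :
    pr (fun ω => p ω * c (f ω)) (fun ω => f ω = b) = pr p (fun ω => f ω = b) * c b := by
  simp only [pr, sum_mul]
  exact sum_congr rfl fun ω _ => by split_ifs with h <;> simp [h]

theorem sum_mul_smul_comp_eq_of_condExp [Fintype β] (hp0 : ∀ ω, 0 ≤ p ω) {G : Ω → ℝ} {f : Ω → β}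
    {c : β → ℝ} (hc : ∀ b, pr p (fun ω => f ω = b) ≠ 0 → c b = condExp p G (fun ω => f ω = b))
    (Y : β → V) :
    ∑ ω, (p ω * G ω) • Y (f ω) = ∑ ω, (p ω * c (f ω)) • Y (f ω) := by
  rw [sum_smul_comp_eq_sum_pr_smul (fun ω => p ω * G ω),
    sum_smul_comp_eq_sum_pr_smul (fun ω => p ω * c (f ω))]
  refine sum_congr rfl fun b _ => congrArg (· • Y b) ?_
  rw [pr_mul_comp_eq, ← pr_mul_condExp hp0]
  rcases eq_or_ne (pr p (fun ω => f ω = b)) 0 with h | h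
  · simp [h]
  · rw [hc b h]

theorem sum_mul_smul_condExpVec_comp [Fintype β] (hp0 : ∀ ω, 0 ≤ p ω) (f : Ω → β) (c : β → ℝ)
    (X : Ω → V) :
    ∑ ω, (p ω * c (f ω)) • condExpVec p X (fun ω' => f ω' = f ω)
      = ∑ ω, (p ω * c (f ω)) • X ω := by
  calc ∑ ω, (p ω * c (f ω)) • condExpVec p X (fun ω' => f ω' = f ω)
      = ∑ b, pr (fun ω => p ω * c (f ω)) (fun ω => f ω = b) •
          condExpVec p X (fun ω' => f ω' = b) :=
        sum_smul_comp_eq_sum_pr_smul _ f fun b => condExpVec p X (fun ω' => f ω' = b)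
    _ = ∑ b, c b • ∑ ω, if f ω = b then p ω • X ω else 0 := by
        refine sum_congr rfl fun b _ => ?_
        rw [pr_mul_comp_eq, mul_comm, mul_smul, sum_ite_smul_eq_pr_smul_condExpVec hp0]
    _ = ∑ ω, (p ω * c (f ω)) • X ω := by
        simp only [smul_sum, smul_ite, smul_zero]
        rw [sum_comm]
        refine sum_congr rfl fun ω _ => ?_
        rw [sum_ite_eq, if_pos (mem_univ _), mul_comm, mul_smul]

theorem sum_mul_smul_condExpVec_eq [Fintype β] (hp0 : ∀ ω, 0 ≤ p ω) {G : Ω → ℝ} {f : Ω → β}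
    {c : β → ℝ} (hc : ∀ b, pr p (fun ω => f ω = b) ≠ 0 → c b = condExp p G (fun ω => f ω = b))
    (X : Ω → V) :
    ∑ ω, (p ω * G ω) • condExpVec p X (fun ω' => f ω' = f ω)
      = ∑ ω, (p ω * c (f ω)) • X ω :=
  (sum_mul_smul_comp_eq_of_condExp hp0 hc fun b => condExpVec p X (fun ω' => f ω' = b)).trans
    (sum_mul_smul_condExpVec_comp hp0 f c X)

end FiniteExpectation

section Network

variable {L : ℕ} {T : ℕ → Type*} {d : ℕ → ℕ}
  (π : (l : ℕ) → T (l - 1) → T l → EuclideanSpace ℝ (Fin (d l)) → ℝ)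
  (W : (l : ℕ) → EuclideanSpace ℝ (Fin (d l)))

def pathWeight (V : (l : ℕ) → EuclideanSpace ℝ (Fin (d l))) (τ : (k : Fin (L + 1)) → T k) : ℝ :=
  ∏ k : Fin L, π (k.1 + 1) (τ k.castSucc) (τ k.succ) (V (k.1 + 1))

/-- `k : Fin L` indexes layer `k + 1`, whose parameters are `W (k + 1)`. -/
def layerScore (k : Fin L) (τ : (k : Fin (L + 1)) → T k) :
    EuclideanSpace ℝ (Fin (d (k.1 + 1))) :=
  gradient (fun w => Real.log (π (k.1 + 1) (τ k.castSucc) (τ k.succ) w)) (W (k.1 + 1))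

theorem pathWeight_update (k : Fin L) (w : EuclideanSpace ℝ (Fin (d (k.1 + 1))))
    (τ : (k : Fin (L + 1)) → T k) :
    pathWeight π (Function.update W (k.1 + 1) w) τ
      = π (k.1 + 1) (τ k.castSucc) (τ k.succ) w *
          ∏ j ∈ univ.erase k, π (j.1 + 1) (τ j.castSucc) (τ j.succ) (W (j.1 + 1)) := by
  rw [pathWeight, ← mul_prod_erase univ _ (mem_univ k), Function.update_self]
  refine congrArg _ (prod_congr rfl fun j hj => ?_)
  rw [Function.update_of_ne (by simpa [Fin.val_inj] using ne_of_mem_erase hj)]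

theorem hasGradientAt_pathWeight_update (k : Fin L) (τ : (k : Fin (L + 1)) → T k)
    (hdiff : DifferentiableAt ℝ (π (k.1 + 1) (τ k.castSucc) (τ k.succ)) (W (k.1 + 1)))
    (hne : π (k.1 + 1) (τ k.castSucc) (τ k.succ) (W (k.1 + 1)) ≠ 0) :
    HasGradientAt (fun w => pathWeight π (Function.update W (k.1 + 1) w) τ)
      (pathWeight π W τ • layerScore π W k τ) (W (k.1 + 1)) := by
  set C := ∏ j ∈ univ.erase k, π (j.1 + 1) (τ j.castSucc) (τ j.succ) (W (j.1 + 1))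
  have hW : pathWeight π W τ = π (k.1 + 1) (τ k.castSucc) (τ k.succ) (W (k.1 + 1)) * C := by
    simpa using pathWeight_update π W k (W (k.1 + 1)) τ
  simp_rw [pathWeight_update]
  rw [hW, mul_comm, mul_smul]
  exact (hasGradientAt_self_smul_gradient_log hdiff hne).mul_const C

end Network

theorem stmt11_general (Ω : Type*) [Fintype Ω] (p : Ω → ℝ)
    (hp0 : ∀ ω, 0 ≤ p ω)
    (L : ℕ) (T : ℕ → Type*) [∀ l, Fintype (T l)]
    (d : ℕ → ℕ)
    (π : (l : ℕ) → T (l - 1) → T l → EuclideanSpace ℝ (Fin (d l)) → ℝ)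
    (W : (l : ℕ) → EuclideanSpace ℝ (Fin (d l)))
    (H : (l : ℕ) → Ω → T l) (G : Ω → ℝ) (R : T 0 → T L → ℝ)
    (hpos : ∀ l ∈ Finset.Icc 1 L, ∀ x y w, 0 < π l x y w)
    (hdiff : ∀ l ∈ Finset.Icc 1 L, ∀ x y, Differentiable ℝ (π l x y))
    (hMarkov : ∀ τ : ((l : Fin (L + 1)) → T l.1),
      pr p (fun ω => ∀ l : Fin (L + 1), H l.1 ω = τ l)
        = pr p (fun ω => H 0 ω = τ ⟨0, Nat.succ_pos L⟩) *
            ∏ l : Fin L, π (l.1 + 1) (τ l.castSucc) (τ l.succ) (W (l.1 + 1)))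
    (hR : ∀ s a, pr p (fun ω => H 0 ω = s ∧ H L ω = a) ≠ 0 →
      R s a = condExp p G (fun ω => H 0 ω = s ∧ H L ω = a))
    (l : ℕ) (hl : l ∈ Finset.Icc 1 L) :
    gradient (fun w : EuclideanSpace ℝ (Fin (d l)) =>
        ∑ τ : ((k : Fin (L + 1)) → T k.1),
          pr p (fun ω => H 0 ω = τ ⟨0, Nat.succ_pos L⟩) *
            (∏ k : Fin L, π (k.1 + 1) (τ k.castSucc) (τ k.succ)
              (Function.update W l w (k.1 + 1))) *
            R (τ ⟨0, Nat.succ_pos L⟩) (τ (Fin.last L))) (W l)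
      = ∑ ω, (p ω * G ω) •
          condExpVec p
            (fun ω' => gradient (fun w => Real.log (π l (H (l - 1) ω') (H l ω') w)) (W l))
            (fun ω' => H 0 ω' = H 0 ω ∧ H L ω' = H L ω) := by
  obtain ⟨m, rfl⟩ : ∃ m, l = m + 1 := ⟨l - 1, by grind⟩
  let k : Fin L := ⟨m, by grind⟩
  let path : Ω → (j : Fin (L + 1)) → T j := fun ω j => H j ω
  let ends : Ω → T 0 × T L := fun ω => (H 0 ω, H L ω)
  have hJ := HasGradientAt.fun_sum (s := univ) fun τ _ =>
    ((hasGradientAt_pathWeight_update π W k τ (hdiff _ hl _ _ _) (hpos _ hl _ _ _).ne').const_mul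
      (pr p (fun ω => H 0 ω = τ ⟨0, Nat.succ_pos L⟩))).mul_const
      (R (τ ⟨0, Nat.succ_pos L⟩) (τ (Fin.last L)))
  have hc : ∀ b, pr p (fun ω => ends ω = b) ≠ 0 →
      Function.uncurry R b = condExp p G (fun ω => ends ω = b) := by
    rintro ⟨s, a⟩
    simpa [ends] using hR s a
  refine hJ.gradient.trans ?_
  calc _ = ∑ τ, pr p (fun ω => path ω = τ) •
          (R (τ ⟨0, Nat.succ_pos L⟩) (τ (Fin.last L)) • layerScore π W k τ) := by
        refine sum_congr rfl fun τ _ => ?_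
        simp only [path, funext_iff, hMarkov, pathWeight, smul_smul]
        congr 1
        ring
    _ = ∑ ω, (p ω * Function.uncurry R (ends ω)) • layerScore π W k (path ω) := by
        rw [← sum_smul_comp_eq_sum_pr_smul]
        simp only [mul_smul]
        rfl
    _ = _ := by
        rw [← sum_mul_smul_condExpVec_eq hp0 hc]
        simp only [ends, Prod.mk.injEq]
        rfl

/-- Single-time-step setting: a multi-layer network of stochastic units
(`H^0 = S`, `H^L = A`, layer conditionals `π_l` strictly positive, normalized and
differentiable in `W^l`, layers forming a Markov chain, the distribution of `S` not depending
on the parameters), a return `G` conditionally independent of the hidden layers given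
`(S, A)` with `E[G | S = s, A = a] = R(s, a)` a fixed reward function.  The expected return,
as a function of the parameters, is
`J(V) = ∑_τ P(S = τ⁰) (∏_{k=1}^L π_k(τ^{k-1}, τ^k; V^k)) R(τ⁰, τ^L)`.  Then for every
`l ∈ {1, …, L}`,
`∇_{W^l} E[G] = E[G · E[∇_{W^l} log π_l(H^{l-1}, H^l; W^l) | S, A]]`. -/
theorem stmt11 (Ω : Type*) [Fintype Ω] (p : Ω → ℝ)
    (hp0 : ∀ ω, 0 ≤ p ω) (hp1 : ∑ ω, p ω = 1)
    (L : ℕ) (hL : 1 ≤ L) (T : ℕ → Type*) [∀ l, Fintype (T l)] [∀ l, Nonempty (T l)]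
    (d : ℕ → ℕ)
    (π : (l : ℕ) → T (l - 1) → T l → EuclideanSpace ℝ (Fin (d l)) → ℝ)
    (W : (l : ℕ) → EuclideanSpace ℝ (Fin (d l)))
    (H : (l : ℕ) → Ω → T l) (G : Ω → ℝ) (R : T 0 → T L → ℝ)
    (hpos : ∀ l ∈ Finset.Icc 1 L, ∀ x y w, 0 < π l x y w)
    (hdiff : ∀ l ∈ Finset.Icc 1 L, ∀ x y, Differentiable ℝ (π l x y))
    (hnorm : ∀ l ∈ Finset.Icc 1 L, ∀ x w, ∑ y, π l x y w = 1)
    (hMarkov : ∀ τ : ((l : Fin (L + 1)) → T l.1),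
      pr p (fun ω => ∀ l : Fin (L + 1), H l.1 ω = τ l)
        = pr p (fun ω => H 0 ω = τ ⟨0, Nat.succ_pos L⟩) *
            ∏ l : Fin L, π (l.1 + 1) (τ l.castSucc) (τ l.succ) (W (l.1 + 1)))
    (hG : ∀ τ : ((l : Fin (L + 1)) → T l.1),
      pr p (fun ω => ∀ l : Fin (L + 1), H l.1 ω = τ l) ≠ 0 →
        condExp p G (fun ω => ∀ l : Fin (L + 1), H l.1 ω = τ l)
          = condExp p G (fun ω => H 0 ω = τ ⟨0, Nat.succ_pos L⟩ ∧ H L ω = τ (Fin.last L)))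
    (hR : ∀ s a, pr p (fun ω => H 0 ω = s ∧ H L ω = a) ≠ 0 →
      R s a = condExp p G (fun ω => H 0 ω = s ∧ H L ω = a))
    (l : ℕ) (hl : l ∈ Finset.Icc 1 L) :
    gradient (fun w : EuclideanSpace ℝ (Fin (d l)) =>
        ∑ τ : ((k : Fin (L + 1)) → T k.1),
          pr p (fun ω => H 0 ω = τ ⟨0, Nat.succ_pos L⟩) *
            (∏ k : Fin L, π (k.1 + 1) (τ k.castSucc) (τ k.succ)
              (Function.update W l w (k.1 + 1))) *
            R (τ ⟨0, Nat.succ_pos L⟩) (τ (Fin.last L))) (W l)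
      = ∑ ω, (p ω * G ω) •
          condExpVec p
            (fun ω' => gradient (fun w => Real.log (π l (H (l - 1) ω') (H l ω') w)) (W l))
            (fun ω' => H 0 ω' = H 0 ω ∧ H L ω' = H L ω) :=
  stmt11_general Ω p hp0 L T d π W H G R hpos hdiff hMarkov hR l hl
end
end
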